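/- Let H be a finite set with product Bernoulli measure μ. If f, g : Finset H → ℝ are both increasing, then the functions (1-f) ⋆ (1-g) and (f-1) ⋆ (g-1) coincide, and this common function F(S) is increasing in S. -/

import Mathlib

open Finset

noncomputable section

variable {H : Type*}

/-- P(X,Y) = ∏_{h∈X∩Y} p_h · ∏_{h∈X∖Y} (1-p_h) -/
def wtP [DecidableEq H] (p : H → ℝ) (X Y : Finset H) : ℝ :=
  (∏ h ∈ X ∩ Y, p h) * ∏ h ∈ X \ Y, (1 - p h)

/-- Coupled coin-tossing measure μ_S on pairs of subsets of H. -/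
def muPair [Fintype H] [DecidableEq H] (p : H → ℝ) (S S₁ S₂ : Finset H) : ℝ :=
  if S ∩ S₁ = S ∩ S₂ then
    wtP p S S₁ * wtP p (univ \ S) S₁ * wtP p (univ \ S) S₂
  else 0

/-- Convolution (f ⋆ g)(S) = Σ_{S₁,S₂} f(S₁) g(S₂) μ_S(S₁,S₂). -/
def starC [Fintype H] [DecidableEq H] (p : H → ℝ) (f g : Finset H → ℝ) (S : Finset H) : ℝ :=
  ∑ S₁ : Finset H, ∑ S₂ : Finset H, f S₁ * g S₂ * muPair p S S₁ S₂

/-- Product Bernoulli measure μ(S) = ∏_{h∈S} p_h ∏_{h∉S} (1-p_h). -/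
def muB [Fintype H] [DecidableEq H] (p : H → ℝ) (S : Finset H) : ℝ :=
  (∏ h ∈ S, p h) * ∏ h ∈ Sᶜ, (1 - p h)

/-- Expectation with respect to the product Bernoulli measure. -/
def expB [Fintype H] [DecidableEq H] (p : H → ℝ) (f : Finset H → ℝ) : ℝ :=
  ∑ S : Finset H, f S * muB p S

/-!
Adding a point `h ∉ T` to `T` replaces the two independent coins that decide `h ∈ S₁` and
`h ∈ S₂` under `μ_T` by one shared coin, leaving every other coordinate as it was. Given the
other coordinates `A, B`, the expectation of `f S₁ * g S₂` therefore grows by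
`p h (1 - p h) (f (A + h) - f A) (g (B + h) - g B)`, which is nonnegative for increasing `f, g`.
Finally `(1 - f) ⋆ (1 - g) = (f - 1) ⋆ (g - 1)` termwise, and `f - 1`, `g - 1` are increasing.
-/
lemma two_point_harris {q a a' b b' : ℝ} (hq₀ : 0 ≤ q) (hq₁ : q ≤ 1)
    (ha : a ≤ a') (hb : b ≤ b') :
    (1 - q) ^ 2 * (a * b) + (1 - q) * q * (a * b') + q * (1 - q) * (a' * b) + q ^ 2 * (a' * b')
      ≤ (1 - q) * (a * b) + q * (a' * b') := by
  have key : 0 ≤ q * (1 - q) * ((a' - a) * (b' - b)) :=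
    mul_nonneg (mul_nonneg hq₀ (by linarith)) (mul_nonneg (by linarith) (by linarith))
  linarith

lemma sum_finset_univ_split {β : Type*} [AddCommMonoid β] [Fintype H] [DecidableEq H] (h : H)
    (F : Finset H → β) :
    ∑ A : Finset H, F A = ∑ A ∈ (univ.erase h).powerset, (F A + F (insert h A)) := by
  rw [sum_add_distrib, ← sum_powerset_insert (notMem_erase h univ), insert_erase (mem_univ h),
    powerset_univ]

lemma sum_sum_finset_univ_split {β : Type*} [AddCommMonoid β] [Fintype H] [DecidableEq H] (h : H)
    (F : Finset H → Finset H → β) :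
    ∑ A : Finset H, ∑ B : Finset H, F A B
      = ∑ A ∈ (univ.erase h).powerset, ∑ B ∈ (univ.erase h).powerset,
          (F A B + F A (insert h B) + F (insert h A) B + F (insert h A) (insert h B)) := by
  rw [sum_finset_univ_split h]
  refine sum_congr rfl fun A _ => ?_
  rw [sum_finset_univ_split h (F A), sum_finset_univ_split h (F (insert h A)), ← sum_add_distrib]
  exact sum_congr rfl fun B _ => by abel

section Weights

variable [DecidableEq H] {p : H → ℝ} {h : H}

lemma wtP_nonneg (hp : ∀ h, 0 ≤ p h ∧ p h ≤ 1) (X Y : Finset H) : 0 ≤ wtP p X Y :=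
  mul_nonneg (prod_nonneg fun h _ => (hp h).1) (prod_nonneg fun h _ => by linarith [(hp h).2])

lemma wtP_union {X X' : Finset H} (hX : Disjoint X X') (Y : Finset H) :
    wtP p (X ∪ X') Y = wtP p X Y * wtP p X' Y := by
  rw [wtP, wtP, wtP, union_inter_distrib_right, union_sdiff_distrib,
    prod_union (hX.mono inter_subset_left inter_subset_left),
    prod_union (hX.mono sdiff_subset sdiff_subset)]
  ring

lemma wtP_singleton (h : H) (Y : Finset H) :
    wtP p {h} Y = if h ∈ Y then p h else 1 - p h := by
  by_cases hY : h ∈ Y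
  · simp [wtP, hY, sdiff_eq_empty_iff_subset.mpr (singleton_subset_iff.mpr hY)]
  · simp [wtP, hY, sdiff_eq_self_of_disjoint (disjoint_singleton_left.mpr hY)]

lemma wtP_insert {X : Finset H} (hX : h ∉ X) (Y : Finset H) :
    wtP p (insert h X) Y = wtP p {h} Y * wtP p X Y := by
  rw [insert_eq, wtP_union (disjoint_singleton_left.mpr hX)]

lemma wtP_insert_right {X : Finset H} (hX : h ∉ X) (Y : Finset H) :
    wtP p X (insert h Y) = wtP p X Y := by
  rw [wtP, wtP, inter_insert_of_notMem hX, sdiff_insert, erase_eq_of_notMem]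
  exact fun hc => hX (mem_sdiff.mp hc).1

end Weights

lemma insert_inter_eq_insert_inter_iff [DecidableEq H] (h : H) (T A B : Finset H) :
    insert h T ∩ A = insert h T ∩ B ↔ (h ∈ A ↔ h ∈ B) ∧ T ∩ A = T ∩ B := by
  constructor
  · intro e
    refine ⟨by simpa using congrArg (h ∈ ·) e, ?_⟩
    simpa only [← inter_assoc, inter_eq_left.mpr (subset_insert h T)] using congrArg (T ∩ ·) e
  · rintro ⟨hh, e⟩
    by_cases hA : h ∈ A
    · rw [insert_inter_of_mem hA, insert_inter_of_mem (hh.mp hA), e]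
    · rw [insert_inter_of_notMem hA, insert_inter_of_notMem (mt hh.mpr hA), e]

section Coupling

variable [Fintype H] [DecidableEq H] {p : H → ℝ} {h : H} {T : Finset H}

/-- The weight `muPair p T A B` with the factor of the coordinate `h ∉ T` left out. -/
def muPairOff (p : H → ℝ) (h : H) (T A B : Finset H) : ℝ :=
  if T ∩ A = T ∩ B then
    wtP p T A * wtP p (univ \ insert h T) A * wtP p (univ \ insert h T) B
  else 0

lemma muPairOff_nonneg (hp : ∀ h, 0 ≤ p h ∧ p h ≤ 1) (h : H) (T A B : Finset H) :
    0 ≤ muPairOff p h T A B := by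
  unfold muPairOff
  split_ifs
  · exact mul_nonneg (mul_nonneg (wtP_nonneg hp _ _) (wtP_nonneg hp _ _)) (wtP_nonneg hp _ _)
  · rfl

lemma muPairOff_insert_left (hT : h ∉ T) (A B : Finset H) :
    muPairOff p h T (insert h A) B = muPairOff p h T A B := by
  have hU : h ∉ univ \ insert h T := by simp
  rw [muPairOff, muPairOff, inter_insert_of_notMem hT, wtP_insert_right hT, wtP_insert_right hU]

lemma muPairOff_insert_right (hT : h ∉ T) (A B : Finset H) :
    muPairOff p h T A (insert h B) = muPairOff p h T A B := by
  have hU : h ∉ univ \ insert h T := by simp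
  rw [muPairOff, muPairOff, inter_insert_of_notMem hT, wtP_insert_right hU]

lemma muPair_eq_muPairOff (hT : h ∉ T) (A B : Finset H) :
    muPair p T A B = wtP p {h} A * wtP p {h} B * muPairOff p h T A B := by
  have hU : h ∉ univ \ insert h T := by simp
  have hcompl : univ \ T = insert h (univ \ insert h T) := by
    rw [sdiff_insert, insert_erase (by simpa using hT)]
  rw [muPair, muPairOff, hcompl, wtP_insert hU, wtP_insert hU]
  split_ifs <;> ring

lemma muPair_insert_eq_muPairOff (hT : h ∉ T) (A B : Finset H) :
    muPair p (insert h T) A B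
      = if (h ∈ A ↔ h ∈ B) then wtP p {h} A * muPairOff p h T A B else 0 := by
  simp only [muPair, muPairOff, insert_inter_eq_insert_inter_iff, ite_and, wtP_insert hT]
  split_ifs <;> ring

end Coupling

lemma starC_le_starC_insert [Fintype H] [DecidableEq H] {p : H → ℝ}
    (hp : ∀ h, 0 ≤ p h ∧ p h ≤ 1) {f g : Finset H → ℝ} (hf : Monotone f) (hg : Monotone g)
    {h : H} {T : Finset H} (hT : h ∉ T) :
    starC p f g T ≤ starC p f g (insert h T) := by
  unfold starC
  rw [sum_sum_finset_univ_split h, sum_sum_finset_univ_split h]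
  refine sum_le_sum fun A hA => sum_le_sum fun B hB => ?_
  have hA' : h ∉ A := fun hc => notMem_erase h univ (mem_powerset.mp hA hc)
  have hB' : h ∉ B := fun hc => notMem_erase h univ (mem_powerset.mp hB hc)
  simp only [muPair_eq_muPairOff hT, muPair_insert_eq_muPairOff hT, muPairOff_insert_left hT,
    muPairOff_insert_right hT, wtP_singleton, mem_insert_self, hA', hB', if_true, if_false,
    iff_self, iff_false, false_iff, not_true_eq_false]
  have harris := mul_le_mul_of_nonneg_left
    (two_point_harris (hp h).1 (hp h).2 (hf (subset_insert h A)) (hg (subset_insert h B)))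
    (muPairOff_nonneg hp h T A B)
  linear_combination harris

theorem starC_monotone [Fintype H] [DecidableEq H] {p : H → ℝ}
    (hp : ∀ h, 0 ≤ p h ∧ p h ≤ 1) {f g : Finset H → ℝ} (hf : Monotone f) (hg : Monotone g) :
    Monotone (starC p f g) :=
  monotone_iff_forall_le_insert.mpr fun _ _ hT => starC_le_starC_insert hp hf hg hT

theorem neither_network_increasing [Fintype H] [DecidableEq H] (p : H → ℝ)
    (hp : ∀ h, 0 ≤ p h ∧ p h ≤ 1) (f g : Finset H → ℝ)
    (hf : ∀ ⦃S T : Finset H⦄, T ⊆ S → f T ≤ f S)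
    (hg : ∀ ⦃S T : Finset H⦄, T ⊆ S → g T ≤ g S) :
    (∀ S : Finset H,
      starC p (fun A => 1 - f A) (fun A => 1 - g A) S
        = starC p (fun A => f A - 1) (fun A => g A - 1) S) ∧
    (∀ ⦃S T : Finset H⦄, T ⊆ S →
      starC p (fun A => 1 - f A) (fun A => 1 - g A) T
        ≤ starC p (fun A => 1 - f A) (fun A => 1 - g A) S) := by
  have sign_flip : ∀ S : Finset H,
      starC p (fun A => 1 - f A) (fun A => 1 - g A) S
        = starC p (fun A => f A - 1) (fun A => g A - 1) S :=
    fun S => sum_congr rfl fun _ _ => sum_congr rfl fun _ _ => by ring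
  have hf' : Monotone fun A => f A - 1 := fun _ _ hAB => sub_le_sub_right (hf hAB) 1
  have hg' : Monotone fun A => g A - 1 := fun _ _ hAB => sub_le_sub_right (hg hAB) 1
  refine ⟨sign_flip, fun S T hTS => ?_⟩
  rw [sign_flip, sign_flip]
  exact starC_monotone hp hf' hg' hTS
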